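/- Let ψ_f = CNOT_{2→1} · (I⊗H) · diag(1,1,1,e^{iπ/2}) · (|+⟩⊗|+⟩), where |+⟩ = (|0⟩+|1⟩)/√2. Then, in the computational basis (|00⟩,|01⟩,|10⟩,|11⟩), ψ_f = (1/√2)·(1, (1−i)/2, (1+i)/2, 0)ᵀ, and the locally rotated state (I⊗(−Y)) ψ_f equals the EJM state ψ_1 up to a global phase: there exists ω ∈ ℂ with |ω| = 1 such that (I⊗(−Y)) ψ_f = ω ψ_1. -/

import Mathlib

open Matrix Complex Kronecker

noncomputable section

def X2 : Matrix (Fin 2) (Fin 2) ℂ := !![0, 1; 1, 0]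
def Y2 : Matrix (Fin 2) (Fin 2) ℂ := !![0, -Complex.I; Complex.I, 0]
def Z2 : Matrix (Fin 2) (Fin 2) ℂ := !![1, 0; 0, -1]

/-- The tetrahedral Bloch vectors `m₁, m₂, m₃, m₄` (0-indexed). -/
def mtet : Fin 4 → Fin 3 → ℝ := fun i j =>
  (![![1, 1, 1], ![1, -1, -1], ![-1, 1, -1], ![-1, -1, 1]] : Fin 4 → Fin 3 → ℝ) i j /
    Real.sqrt 3

def bTheta (m : Fin 3 → ℝ) : ℝ := Real.arccos (m 2)
def bPhi (m : Fin 3 → ℝ) : ℝ := Complex.arg ((m 0 : ℂ) + (m 1 : ℂ) * Complex.I)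

/-- `|m⟩ = cos(θ/2)|0⟩ + sin(θ/2) e^{iφ} |1⟩`. -/
def ketP (m : Fin 3 → ℝ) : Fin 2 → ℂ :=
  ![(Real.cos (bTheta m / 2) : ℂ),
    (Real.sin (bTheta m / 2) : ℂ) * Complex.exp ((bPhi m : ℂ) * Complex.I)]

/-- `|−m⟩ = sin(θ/2)|0⟩ − cos(θ/2) e^{iφ} |1⟩`. -/
def ketM (m : Fin 3 → ℝ) : Fin 2 → ℂ :=
  ![(Real.sin (bTheta m / 2) : ℂ),
    -((Real.cos (bTheta m / 2) : ℂ)) * Complex.exp ((bPhi m : ℂ) * Complex.I)]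

/-- Tensor product of two qubit vectors. -/
def tp (u w : Fin 2 → ℂ) : Fin 2 × Fin 2 → ℂ := fun p => u p.1 * w p.2

/-- The EJM basis states `ψ_1, …, ψ_4` (0-indexed). -/
def ψEJM (i : Fin 4) : Fin 2 × Fin 2 → ℂ :=
  (((Real.sqrt 3 + 1) / (2 * Real.sqrt 2) : ℝ) : ℂ) • tp (ketP (mtet i)) (ketM (mtet i)) +
    (((Real.sqrt 3 - 1) / (2 * Real.sqrt 2) : ℝ) : ℂ) • tp (ketM (mtet i)) (ketP (mtet i))

/-- Inner product on `ℂ² ⊗ ℂ²` (conjugate-linear in the first argument). -/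
def ip2 (v w : Fin 2 × Fin 2 → ℂ) : ℂ := ∑ p, star (v p) * w p

/-- `m·σ = m_x X + m_y Y + m_z Z`. -/
def mDotSigma (m : Fin 3 → ℝ) : Matrix (Fin 2) (Fin 2) ℂ :=
  (m 0 : ℂ) • X2 + (m 1 : ℂ) • Y2 + (m 2 : ℂ) • Z2

end

noncomputable section

/-- `CNOT_{2→1}`: control qubit 2, target qubit 1 (flips the first factor when the
second is `|1⟩`). -/
def CNOT21 : Matrix (Fin 2 × Fin 2) (Fin 2 × Fin 2) ℂ :=
  fun p q => if p = (q.1 + q.2, q.2) then 1 else 0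

def H2 : Matrix (Fin 2) (Fin 2) ℂ := (((Real.sqrt 2)⁻¹ : ℝ) : ℂ) • !![1, 1; 1, -1]

/-- `|+⟩ = (|0⟩ + |1⟩)/√2`. -/
def ketPlus : Fin 2 → ℂ := fun _ => (((Real.sqrt 2)⁻¹ : ℝ) : ℂ)

/-- `diag(1,1,1,e^{iπ/2})` in the computational basis `|00⟩,|01⟩,|10⟩,|11⟩`. -/
def Dphase : Matrix (Fin 2 × Fin 2) (Fin 2 × Fin 2) ℂ :=
  Matrix.diagonal (fun p => if p = (1, 1) then Complex.exp (Real.pi * Complex.I / 2) else 1)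

/-- The fiducial `ψ_f = CNOT_{2→1} (I⊗H) diag(1,1,1,e^{iπ/2}) (|+⟩⊗|+⟩)`. -/
def ψf : Fin 2 × Fin 2 → ℂ :=
  (CNOT21 * ((1 : Matrix (Fin 2) (Fin 2) ℂ) ⊗ₖ H2) * Dphase).mulVec (tp ketPlus ketPlus)

/-! By the half-angle formulas the product states `|m⟩ ⊗ |−m⟩` and `|−m⟩ ⊗ |m⟩` depend only on
`cos θ`, `sin θ` and `e^{iφ}`. For `m₁` these are `1/√3`, `√2/√3` and `e^{iπ/4} = (1 + i)/√2`, which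
makes `ψ_1 = (1/2, −(1 + i)/2, 0, −i/2)`; the global phase relating it to `(I ⊗ (−Y)) ψ_f` is
`ω = e^{iφ₁}`. -/

theorem CNOT21_mulVec (v : Fin 2 × Fin 2 → ℂ) :
    CNOT21 *ᵥ v = fun p => v (p.1 + p.2, p.2) := by
  have involutive : ∀ p q : Fin 2 × Fin 2, p = (q.1 + q.2, q.2) ↔ q = (p.1 + p.2, p.2) := by
    decide
  ext p
  simp [mulVec, dotProduct, CNOT21, involutive p]

theorem one_kronecker_mulVec {R m n : Type*} [CommSemiring R] [Fintype m] [Fintype n]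
    [DecidableEq m] (B : Matrix n n R) (v : m × n → R) :
    ((1 : Matrix m m R) ⊗ₖ B) *ᵥ v = fun p => (B *ᵥ fun c => v (p.1, c)) p.2 := by
  ext ⟨a, b⟩
  simp [mulVec, dotProduct, kroneckerMap_apply, one_apply, Fintype.sum_prod_type]

theorem Dphase_mulVec (v : Fin 2 × Fin 2 → ℂ) :
    Dphase *ᵥ v = fun p => (if p = (1, 1) then I else 1) * v p := by
  ext p
  rw [Dphase, mulVec_diagonal, show (Real.pi : ℂ) * I / 2 = Real.pi / 2 * I by ring,
    exp_pi_div_two_mul_I]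

theorem ψf_eq : ψf = fun p => (((Real.sqrt 2)⁻¹ : ℝ) : ℂ) *
      (![![1, (1 - Complex.I) / 2], ![(1 + Complex.I) / 2, 0]] : Fin 2 → Fin 2 → ℂ)
        p.1 p.2 := by
  have half : ((√2 : ℝ) : ℂ)⁻¹ * ((√2 : ℝ) : ℂ)⁻¹ = 2⁻¹ := by
    rw [← mul_inv, ← ofReal_mul, Real.mul_self_sqrt zero_le_two, ofReal_ofNat]
  rw [ψf, ← mulVec_mulVec, ← mulVec_mulVec, CNOT21_mulVec, Dphase_mulVec, one_kronecker_mulVec]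
  ext ⟨a, b⟩
  fin_cases a <;> fin_cases b <;>
    simp [H2, tp, ketPlus, mulVec, dotProduct, Fin.sum_univ_two, half] <;> ring

theorem tp_half_angle (θ : ℝ) (e : ℂ) :
    tp ![(Real.cos (θ / 2) : ℂ), Real.sin (θ / 2) * e]
        ![(Real.sin (θ / 2) : ℂ), -Real.cos (θ / 2) * e] =
      fun p => (![![Real.sin θ / 2, -(1 + Real.cos θ) / 2 * e],
        ![(1 - Real.cos θ) / 2 * e, -Real.sin θ / 2 * e ^ 2]] : Fin 2 → Fin 2 → ℂ) p.1 p.2 := by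
  have hsin := Complex.sin_two_mul (θ / 2)
  have hcos := Complex.cos_two_mul (θ / 2)
  have pythagoras := Complex.sin_sq_add_cos_sq (θ / 2)
  rw [mul_div_cancel₀ _ two_ne_zero] at hsin hcos
  ext ⟨a, b⟩
  fin_cases a <;> fin_cases b <;>
    simp only [tp, Fin.zero_eta, Fin.mk_one, Fin.isValue, cons_val_zero, cons_val_one, cons_val',
      cons_val_fin_one, ofReal_cos, ofReal_sin, ofReal_div, ofReal_ofNat]
  · linear_combination (-1 / 2 : ℂ) * hsin
  · linear_combination e / 2 * hcos
  · linear_combination e * pythagoras + e / 2 * hcos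
  · linear_combination e ^ 2 / 2 * hsin

theorem tp_comm (u w : Fin 2 → ℂ) : tp w u = fun p => tp u w (p.2, p.1) := by
  ext p
  exact mul_comm _ _

theorem mtet_zero_apply (j : Fin 3) : mtet 0 j = (√3)⁻¹ := by
  fin_cases j <;> simp [mtet, one_div]

theorem cos_bTheta_mtet_zero : Real.cos (bTheta (mtet 0)) = (√3)⁻¹ := by
  have h₀ : 0 ≤ (√3)⁻¹ := by positivity
  have h₁ : (√3)⁻¹ ≤ 1 := inv_le_one_of_one_le₀ (Real.one_le_sqrt.mpr (by norm_num))
  rw [bTheta, mtet_zero_apply, Real.cos_arccos (by linarith) h₁]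

theorem sin_bTheta_mtet_zero : Real.sin (bTheta (mtet 0)) = √2 / √3 := by
  rw [bTheta, mtet_zero_apply, Real.sin_arccos, inv_pow, Real.sq_sqrt (by norm_num),
    ← Real.sqrt_div' _ (by norm_num)]
  norm_num

theorem exp_bPhi_mtet_zero : exp (bPhi (mtet 0) * I) = (1 + I) / (√2 : ℝ) := by
  have hz : (mtet 0 0 : ℂ) + mtet 0 1 * I = ((√3)⁻¹ : ℝ) * (1 + I) := by
    rw [mtet_zero_apply, mtet_zero_apply]; ring
  have hnorm : ‖(1 + I : ℂ)‖ = √2 := by simpa [one_add_one_eq_two] using norm_add_mul_I 1 1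
  rw [bPhi, hz, arg_real_mul _ (by positivity), eq_div_iff (by simp), mul_comm, ← hnorm]
  exact norm_mul_exp_arg_mul_I (1 + I)

theorem ψEJM_zero : ψEJM 0 = fun p =>
    (![![1 / 2, -(1 + I) / 2], ![0, -I / 2]] : Fin 2 → Fin 2 → ℂ) p.1 p.2 := by
  have h2 : ((√2 : ℝ) : ℂ) ^ 2 = 2 := by norm_cast; simp
  rw [ψEJM, tp_comm (ketP _), ketP, ketM, tp_half_angle, cos_bTheta_mtet_zero,
    sin_bTheta_mtet_zero, exp_bPhi_mtet_zero]
  ext ⟨a, b⟩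
  fin_cases a <;> fin_cases b <;> simp <;> field_simp
  · ring
  · linear_combination 2 * ((√3 : ℝ) : ℂ) * (1 + I) * h2
  · ring
  · linear_combination -2 * ((√3 : ℝ) : ℂ) * I_sq + 2 * ((√3 : ℝ) : ℂ) * I * h2

/-- `ψ_f = (1/√2)(1, (1−i)/2, (1+i)/2, 0)ᵀ` in the computational basis,
and `(I ⊗ (−Y)) ψ_f` equals the EJM state `ψ_1` up to a global phase. -/
theorem EJM_fiducial_circuit :
    (ψf = fun p => (((Real.sqrt 2)⁻¹ : ℝ) : ℂ) *
      (![![1, (1 - Complex.I) / 2], ![(1 + Complex.I) / 2, 0]] : Fin 2 → Fin 2 → ℂ)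
        p.1 p.2) ∧
    ∃ ω : ℂ, ‖ω‖ = 1 ∧
      ((1 : Matrix (Fin 2) (Fin 2) ℂ) ⊗ₖ (-Y2)).mulVec ψf = ω • ψEJM 0 := by
  refine ⟨ψf_eq, exp (bPhi (mtet 0) * I), norm_exp_ofReal_mul_I _, ?_⟩
  rw [exp_bPhi_mtet_zero, ψf_eq, ψEJM_zero, one_kronecker_mulVec]
  ext ⟨a, b⟩
  fin_cases a <;> fin_cases b <;> simp [Y2, mulVec, dotProduct, Fin.sum_univ_two] <;> field_simp
  · linear_combination -I_sq
  · linear_combination I_sq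

end
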